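/- arXiv:1605.04119 — 3 statements merged into one kernel-verified Lean document; each statement's English description precedes it below -/
import Mathlib

section
/- Let (X,d) be a proper metric space in which every two points are joined by a geodesic segment, i.e., for all p, q ∈ X there exists γ : ℝ → X with γ(0) = p, γ(d(p,q)) = q and d(γ(s), γ(t)) = |t − s| for all s, t ∈ [0, d(p,q)]. Let x ∈ X and let u : ℕ → X be a sequence with d(u_n, x) → ∞. Then there exists a strictly increasing map σ : ℕ → ℕ such that the subsequence u ∘ σ is admissible with respect to x, i.e., d(x, u_{σ(n)}) → ∞ and E_x(u ∘ σ, R) ≠ ∅ for every R > 0. -/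
open Filter Set Topology

noncomputable section

/-- The horosphere of a sequence `u` with respect to base point `x` and radius `R`
in a metric space. -/
def horoE {X : Type*} [MetricSpace X] (x : X) (u : ℕ → X) (R : ℝ) : Set X :=
  {w : X | Filter.limsup (fun n => dist w (u n) - dist x (u n)) Filter.atTop
      < (1 / 2) * Real.log R}

theorem exists_admissible_subsequence {X : Type*} [MetricSpace X] [ProperSpace X]
    (hgeo : ∀ p q : X, ∃ γ : ℝ → X, γ 0 = p ∧ γ (dist p q) = q ∧
      ∀ s ∈ Set.Icc (0 : ℝ) (dist p q), ∀ t ∈ Set.Icc (0 : ℝ) (dist p q),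
        dist (γ s) (γ t) = |t - s|)
    (x : X) (u : ℕ → X)
    (hu : Filter.Tendsto (fun n => dist (u n) x) Filter.atTop Filter.atTop) :
    ∃ σ : ℕ → ℕ, StrictMono σ ∧
      Filter.Tendsto (fun n => dist x (u (σ n))) Filter.atTop Filter.atTop ∧
      ∀ R > (0 : ℝ), (horoE x (u ∘ σ) R).Nonempty := by
  classical
  -- choose geodesics from x to u n
  set γ : ℕ → ℝ → X := fun n => Classical.choose (hgeo x (u n)) with hγ
  have hγ0 : ∀ n, γ n 0 = x := fun n => (Classical.choose_spec (hgeo x (u n))).1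
  have hγd : ∀ n, γ n (dist x (u n)) = u n :=
    fun n => (Classical.choose_spec (hgeo x (u n))).2.1
  have hγiso : ∀ n, ∀ s ∈ Set.Icc (0 : ℝ) (dist x (u n)),
      ∀ t ∈ Set.Icc (0 : ℝ) (dist x (u n)), dist (γ n s) (γ n t) = |t - s| :=
    fun n => (Classical.choose_spec (hgeo x (u n))).2.2
  -- points along the geodesic at distance min k d
  set F : ℕ → (ℕ → X) := fun n k => γ n (min (k : ℝ) (dist x (u n))) with hF
  have hmem : ∀ (n k : ℕ), min ((k : ℝ)) (dist x (u n)) ∈ Set.Icc (0 : ℝ) (dist x (u n)) := by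
    intro n k
    exact ⟨le_min (Nat.cast_nonneg k) dist_nonneg, min_le_right _ _⟩
  have hzero : ∀ n, (0 : ℝ) ∈ Set.Icc (0 : ℝ) (dist x (u n)) :=
    fun n => ⟨le_rfl, dist_nonneg⟩
  have hball : ∀ n, F n ∈ Set.pi Set.univ (fun k : ℕ => Metric.closedBall x (k : ℝ)) := by
    intro n k _
    have := hγiso n 0 (hzero n) _ (hmem n k)
    rw [hγ0] at this
    simp only [Metric.mem_closedBall, hF]
    rw [dist_comm, this, sub_zero, abs_of_nonneg (le_min (Nat.cast_nonneg k) dist_nonneg)]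
    exact min_le_left _ _
  have hcomp : IsCompact (Set.pi Set.univ (fun k : ℕ => Metric.closedBall x (k : ℝ))) :=
    isCompact_univ_pi fun k => ProperSpace.isCompact_closedBall x _
  obtain ⟨a, -, φ, hφ, hlim⟩ := hcomp.tendsto_subseq hball
  have hlimk : ∀ k, Tendsto (fun n => F (φ n) k) atTop (𝓝 (a k)) := by
    intro k
    exact (tendsto_pi_nhds.mp hlim) k
  have hdtend : Tendsto (fun n => dist x (u (φ n))) atTop atTop := by
    exact (hu.comp hφ.tendsto_atTop).congr fun n => dist_comm _ _
  refine ⟨φ, hφ, hdtend, ?_⟩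
  intro R hR
  set L := (1 / 2) * Real.log R with hL
  obtain ⟨k, hk⟩ := exists_nat_gt (1 - L)
  refine ⟨a k, ?_⟩
  -- show a k is in the horosphere
  have hklarge : ∀ᶠ n in atTop, (k : ℝ) ≤ dist x (u (φ n)) := hdtend.eventually_ge_atTop _
  have hclose : ∀ᶠ n in atTop, dist (a k) (F (φ n) k) ≤ 1 / 2 := by
    have : Tendsto (fun n => dist (a k) (F (φ n) k)) atTop (𝓝 0) := by
      have := (hlimk k).dist (tendsto_const_nhds (x := a k))
      simpa [dist_comm] using this
    exact (this.eventually (ge_mem_nhds (by norm_num : (0:ℝ) < 1/2)))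
  have hev : ∀ᶠ n in atTop,
      dist (a k) ((u ∘ φ) n) - dist x ((u ∘ φ) n) ≤ 1 / 2 - k := by
    filter_upwards [hklarge, hclose] with n hkn hcn
    set d := dist x (u (φ n)) with hd
    have hmin : min ((k : ℝ)) d = k := min_eq_left hkn
    have hdist : dist (F (φ n) k) (u (φ n)) = d - k := by
      have := hγiso (φ n) _ (hmem (φ n) k) d ⟨dist_nonneg, le_rfl⟩
      rw [hγd] at this
      rw [hF]
      simp only at this ⊢
      rw [this, hmin, abs_of_nonneg (by linarith)]
    have htri : dist (a k) (u (φ n)) ≤ dist (a k) (F (φ n) k) + (d - k) := by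
      calc dist (a k) (u (φ n)) ≤ dist (a k) (F (φ n) k) + dist (F (φ n) k) (u (φ n)) :=
            dist_triangle _ _ _
        _ = dist (a k) (F (φ n) k) + (d - k) := by rw [hdist]
    simp only [Function.comp]
    linarith
  have hcobdd : IsCoboundedUnder (· ≤ ·) atTop
      (fun n => dist (a k) ((u ∘ φ) n) - dist x ((u ∘ φ) n)) := by
    apply Filter.isCoboundedUnder_le_of_le atTop (x := -dist (a k) x)
    intro n
    have := dist_triangle x (a k) ((u ∘ φ) n)
    rw [dist_comm x (a k)] at this
    linarith
  have hlimsup : limsup (fun n => dist (a k) ((u ∘ φ) n) - dist x ((u ∘ φ) n)) atTop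
      ≤ 1 / 2 - k := Filter.limsup_le_of_le hcobdd hev
  have : (1 : ℝ) / 2 - k < L := by linarith
  exact lt_of_le_of_lt hlimsup this
end
end

section
/- Let (M,d) be a separable metric space, x ∈ M, and let u : ℕ → M be a sequence with d(x, u_n) → ∞. Then there exists a strictly increasing map σ : ℕ → ℕ such that u ∘ σ is a Busemann sequence, i.e., d(x, u_{σ(n)}) → ∞ and for every z ∈ M the limit lim_{n→∞} (d(z, u_{σ(n)}) − d(x, u_{σ(n)})) exists. -/
open Filter Set Topology

noncomputable section

theorem exists_busemann_subsequence {M : Type*} [MetricSpace M]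
    [TopologicalSpace.SeparableSpace M] (x : M) (u : ℕ → M)
    (hu : Filter.Tendsto (fun n => dist x (u n)) Filter.atTop Filter.atTop) :
    ∃ σ : ℕ → ℕ, StrictMono σ ∧
      Filter.Tendsto (fun n => dist x (u (σ n))) Filter.atTop Filter.atTop ∧
      ∀ z : M, ∃ L : ℝ,
        Filter.Tendsto (fun n => dist z (u (σ n)) - dist x (u (σ n)))
          Filter.atTop (nhds L) := by
  obtain ⟨s, hsc, hsd⟩ := TopologicalSpace.exists_countable_dense M
  haveI : Countable s := hsc.to_subtype
  set F : ℕ → (s → ℝ) := fun n d => dist (d : M) (u n) - dist x (u n) with hF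
  have hK : IsCompact (Set.pi univ (fun d : s => Icc (-(dist x (d : M))) (dist x (d : M)))) :=
    isCompact_univ_pi fun d => isCompact_Icc
  have hmem : ∀ n, F n ∈ Set.pi univ (fun d : s => Icc (-(dist x (d : M))) (dist x (d : M))) := by
    intro n d _
    have h := abs_dist_sub_le (d : M) x (u n)
    rw [abs_le, dist_comm (d : M) x] at h
    simp only [hF, mem_Icc]
    exact h
  obtain ⟨L, _, σ, hσ, hconv⟩ := hK.tendsto_subseq hmem
  have hpt : ∀ d : s, Tendsto (fun n => F (σ n) d) atTop (𝓝 (L d)) := by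
    intro d
    have := (continuous_apply d).continuousAt.tendsto.comp hconv
    exact this
  refine ⟨σ, hσ, hu.comp hσ.tendsto_atTop, ?_⟩
  intro z
  set g : ℕ → ℝ := fun n => dist z (u (σ n)) - dist x (u (σ n)) with hg
  have hcauchy : CauchySeq g := by
    rw [Metric.cauchySeq_iff]
    intro ε hε
    obtain ⟨d, hdball, hds⟩ := Metric.dense_iff.mp hsd z (ε / 5) (by linarith)
    have hdz : dist z d < ε / 5 := by
      rw [Metric.mem_ball, dist_comm] at hdball
      exact hdball
    have hc : CauchySeq (fun n => F (σ n) ⟨d, hds⟩) := (hpt ⟨d, hds⟩).cauchySeq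
    rw [Metric.cauchySeq_iff] at hc
    obtain ⟨N, hN⟩ := hc (ε / 5) (by linarith)
    refine ⟨N, fun m hm n hn => ?_⟩
    have hclose : ∀ k, |g k - F (σ k) ⟨d, hds⟩| ≤ dist z d := by
      intro k
      have : g k - F (σ k) ⟨d, hds⟩ = dist z (u (σ k)) - dist d (u (σ k)) := by
        simp [hg, hF]
      rw [this]
      exact abs_dist_sub_le z d (u (σ k))
    have hmn := hN m hm n hn
    rw [Real.dist_eq] at hmn ⊢
    have h1 := hclose m
    have h2 := hclose n
    have : g m - g n = (g m - F (σ m) ⟨d, hds⟩) + (F (σ m) ⟨d, hds⟩ - F (σ n) ⟨d, hds⟩)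
        + (F (σ n) ⟨d, hds⟩ - g n) := by ring
    calc |g m - g n| ≤ |g m - F (σ m) ⟨d, hds⟩| + |F (σ m) ⟨d, hds⟩ - F (σ n) ⟨d, hds⟩|
          + |F (σ n) ⟨d, hds⟩ - g n| := by rw [this]; exact (abs_add_three _ _ _)
      _ < ε := by
          rw [abs_sub_comm (F (σ n) ⟨d, hds⟩) (g n)]
          linarith
  obtain ⟨L', hL'⟩ := cauchySeq_tendsto_of_complete hcauchy
  exact ⟨L', hL'⟩
end
end

section
/- There is no biholomorphism between the Euclidean unit ball and the bidisc in ℂ²: there exists no bijective map F from B := {(z₁,z₂) ∈ ℂ² : |z₁|² + |z₂|² < 1} onto 𝔻² := {(z₁,z₂) ∈ ℂ² : |z₁| < 1 and |z₂| < 1} such that F is holomorphic (complex differentiable) on B and its inverse is holomorphic on 𝔻². -/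
open Set

noncomputable section

/-- The Euclidean open unit ball in `ℂ²`. -/
def euclBall : Set (ℂ × ℂ) := {z : ℂ × ℂ | ‖z.1‖ ^ 2 + ‖z.2‖ ^ 2 < 1}

/-- The open unit bidisc in `ℂ²`. -/
def bidisc : Set (ℂ × ℂ) := {z : ℂ × ℂ | ‖z.1‖ < 1 ∧ ‖z.2‖ < 1}

/-!
Compose with an automorphism of the bidisc so that the biholomorphism fixes the origin. By the
Schwarz lemma its derivative at the origin and that of its inverse are both contractions, for the
Euclidean norm on the side of the ball and the sup norm on the side of the bidisc; being mutually
inverse, they are isometries. But the sup norm on `ℂ²` is not strictly convex (its unit sphere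
contains segments), whereas every norm isometric to a Euclidean one is.
-/

open Metric ComplexConjugate

section Schwarz

variable {E F : Type*} [NormedAddCommGroup E] [NormedSpace ℂ E]
  [NormedAddCommGroup F] [NormedSpace ℂ F]

theorem norm_fderiv_zero_apply_eq_of_rightInverse_unitBall {f : E → F} {g : F → E}
    (hf : DifferentiableOn ℂ f (ball 0 1)) (hg : DifferentiableOn ℂ g (ball 0 1))
    (hf_maps : MapsTo f (ball 0 1) (ball 0 1)) (hg_maps : MapsTo g (ball 0 1) (ball 0 1))
    (hfg : ∀ w ∈ ball (0 : F) 1, f (g w) = w) (hg₀ : g 0 = 0) (w : F) :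
    ‖fderiv ℂ g 0 w‖ = ‖w‖ := by
  have hf₀ : f 0 = 0 := by rw [← hg₀, hfg 0 (mem_ball_self one_pos)]
  have hf' : ‖fderiv ℂ f 0‖ ≤ 1 := Complex.norm_fderiv_le_one_of_mapsTo_ball hf
    (hf₀ ▸ hf_maps.mono_right ball_subset_closedBall) one_pos
  have hg' : ‖fderiv ℂ g 0‖ ≤ 1 := Complex.norm_fderiv_le_one_of_mapsTo_ball hg
    (hg₀ ▸ hg_maps.mono_right ball_subset_closedBall) one_pos
  have hchain : (fderiv ℂ f 0).comp (fderiv ℂ g 0) = ContinuousLinearMap.id ℂ F := by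
    have hfg_nhds : f ∘ g =ᶠ[nhds 0] id := Filter.eventually_of_mem (ball_mem_nhds 0 one_pos) hfg
    have hf₀' : HasFDerivAt f (fderiv ℂ f 0) (g 0) :=
      hg₀ ▸ (hf.differentiableAt (ball_mem_nhds 0 one_pos)).hasFDerivAt
    exact (hf₀'.comp 0 (hg.differentiableAt (ball_mem_nhds 0 one_pos)).hasFDerivAt).unique
      ((hasFDerivAt_id 0).congr_of_eventuallyEq hfg_nhds)
  refine le_antisymm ((fderiv ℂ g 0).le_of_opNorm_le hg' w |>.trans_eq (one_mul _)) ?_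
  calc ‖w‖ = ‖fderiv ℂ f 0 (fderiv ℂ g 0 w)‖ := by
        rw [← ContinuousLinearMap.comp_apply, hchain, ContinuousLinearMap.id_apply]
    _ ≤ ‖fderiv ℂ g 0 w‖ := (fderiv ℂ f 0).le_of_opNorm_le hf' _ |>.trans_eq (one_mul _)

theorem StrictConvexSpace.of_rightInverse_unitBall [StrictConvexSpace ℝ E] {f : E → F}
    {g : F → E} (hf : DifferentiableOn ℂ f (ball 0 1)) (hg : DifferentiableOn ℂ g (ball 0 1))
    (hf_maps : MapsTo f (ball 0 1) (ball 0 1)) (hg_maps : MapsTo g (ball 0 1) (ball 0 1))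
    (hfg : ∀ w ∈ ball (0 : F) 1, f (g w) = w) (hg₀ : g 0 = 0) :
    StrictConvexSpace ℝ F :=
  LinearIsometry.strictConvexSpace
    { toLinearMap := (fderiv ℂ g 0).toLinearMap.restrictScalars ℝ
      norm_map' := norm_fderiv_zero_apply_eq_of_rightInverse_unitBall hf hg hf_maps hg_maps hfg hg₀ }

end Schwarz

theorem Prod.not_strictConvexSpace {E F : Type*} [NormedAddCommGroup E] [NormedSpace ℝ E]
    [NormedAddCommGroup F] [NormedSpace ℝ F] [Nontrivial E] [Nontrivial F] :
    ¬ StrictConvexSpace ℝ (E × F) := by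
  intro _
  obtain ⟨a, ha⟩ := exists_norm_eq E zero_le_one
  obtain ⟨b, hb⟩ := exists_norm_eq F zero_le_one
  have hb₀ : b ≠ 0 := norm_ne_zero_iff.mp (by rw [hb]; exact one_ne_zero)
  have hsum : (a, b) + (a, 0) = ((2 : ℝ) • a, b) := by
    rw [Prod.mk_add_mk, add_zero, two_smul]
  have heq := eq_of_norm_eq_of_norm_add_eq (x := (a, b)) (y := (a, 0))
    (by simp [ha, hb]) (by simp [hsum, norm_smul, ha, hb]; norm_num)
  exact hb₀ (Prod.mk.inj heq).2

def mobius (c z : ℂ) : ℂ := (z - c) / (1 - conj c * z)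

section Mobius

variable {c z : ℂ}

theorem one_sub_conj_mul_ne_zero (hc : ‖c‖ < 1) (hz : ‖z‖ < 1) : 1 - conj c * z ≠ 0 := by
  refine sub_ne_zero.mpr fun h ↦ ?_
  have : ‖conj c * z‖ < 1 := by
    rw [norm_mul, Complex.norm_conj]
    nlinarith [norm_nonneg c, norm_nonneg z]
  simp [← h] at this

theorem norm_mobius_lt_one (hc : ‖c‖ < 1) (hz : ‖z‖ < 1) : ‖mobius c z‖ < 1 := by
  have hd := one_sub_conj_mul_ne_zero hc hz
  rw [mobius, norm_div, div_lt_one (norm_pos_iff.mpr hd), ← sq_lt_sq₀ (norm_nonneg _)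
    (norm_nonneg _), Complex.sq_norm, Complex.sq_norm]
  have key : Complex.normSq (1 - conj c * z) - Complex.normSq (z - c) =
      (1 - Complex.normSq c) * (1 - Complex.normSq z) := by
    simp only [Complex.normSq_apply, Complex.sub_re, Complex.sub_im, Complex.one_re,
      Complex.one_im, Complex.mul_re, Complex.mul_im, Complex.conj_re, Complex.conj_im]
    ring
  have hc' : Complex.normSq c < 1 := by rw [← Complex.sq_norm]; nlinarith [norm_nonneg c]
  have hz' : Complex.normSq z < 1 := by rw [← Complex.sq_norm]; nlinarith [norm_nonneg z]
  nlinarith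

theorem differentiableAt_mobius (hc : ‖c‖ < 1) (hz : ‖z‖ < 1) :
    DifferentiableAt ℂ (mobius c) z :=
  (differentiableAt_id.sub_const c).div (by fun_prop) (one_sub_conj_mul_ne_zero hc hz)

theorem mobius_neg_apply (c z : ℂ) : mobius (-c) z = (z + c) / (1 + conj c * z) := by
  simp [mobius, sub_eq_add_neg]

theorem mobius_mobius_neg (hc : ‖c‖ < 1) (hz : ‖z‖ < 1) : mobius c (mobius (-c) z) = z := by
  have hd : 1 + conj c * z ≠ 0 := by
    simpa [sub_eq_add_neg] using one_sub_conj_mul_ne_zero (c := -c) (by rwa [norm_neg]) hz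
  have hcc := one_sub_conj_mul_ne_zero hc hc
  rw [mobius, mobius_neg_apply, div_sub' hd, mul_div_assoc', one_sub_div hd,
    div_div_div_cancel_right₀ hd, div_eq_iff (by convert hcc using 1; ring)]
  ring

end Mobius

def mobiusProd (q w : ℂ × ℂ) : ℂ × ℂ := (mobius q.1 w.1, mobius q.2 w.2)

section MobiusProd

variable {q w : ℂ × ℂ}

theorem mapsTo_mobiusProd (hq : q ∈ bidisc) : MapsTo (mobiusProd q) bidisc bidisc :=
  fun _ hw ↦ ⟨norm_mobius_lt_one hq.1 hw.1, norm_mobius_lt_one hq.2 hw.2⟩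

theorem differentiableAt_mobiusProd (hq : q ∈ bidisc) (hw : w ∈ bidisc) :
    DifferentiableAt ℂ (mobiusProd q) w :=
  ((differentiableAt_mobius hq.1 hw.1).comp w differentiableAt_fst).prodMk
    ((differentiableAt_mobius hq.2 hw.2).comp w differentiableAt_snd)

theorem mobiusProd_neg_zero (q : ℂ × ℂ) : mobiusProd (-q) 0 = q := by
  simp [mobiusProd, mobius_neg_apply]

theorem mobiusProd_mobiusProd_neg (hq : q ∈ bidisc) (hw : w ∈ bidisc) :
    mobiusProd q (mobiusProd (-q) w) = w := by
  simp only [mobiusProd, Prod.fst_neg, Prod.snd_neg, mobius_mobius_neg hq.1 hw.1,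
    mobius_mobius_neg hq.2 hw.2]

end MobiusProd

theorem bidisc_eq_ball : bidisc = ball (0 : ℂ × ℂ) 1 := by
  ext w
  simp [bidisc, Prod.norm_def]

theorem mem_euclBall_iff {z : ℂ × ℂ} : z ∈ euclBall ↔ WithLp.toLp 2 z ∈ ball 0 1 := by
  rw [mem_ball_zero_iff, ← sq_lt_one_iff₀ (norm_nonneg _), WithLp.prod_norm_sq_eq_of_L2]
  rfl

theorem no_biholomorphism_ball_bidisc :
    ¬ ∃ F G : ℂ × ℂ → ℂ × ℂ,
      Set.MapsTo F euclBall bidisc ∧ Set.MapsTo G bidisc euclBall ∧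
      (∀ z ∈ euclBall, DifferentiableAt ℂ F z) ∧
      (∀ w ∈ bidisc, DifferentiableAt ℂ G w) ∧
      (∀ z ∈ euclBall, G (F z) = z) ∧
      (∀ w ∈ bidisc, F (G w) = w) := by
  rintro ⟨F, G, hF, hG, hdF, hdG, hGF, hFG⟩
  set e := WithLp.prodContinuousLinearEquiv 2 ℂ ℂ ℂ
  have he : MapsTo e (ball 0 1) euclBall := fun _ hx ↦ mem_euclBall_iff.mpr hx
  have he_symm : MapsTo e.symm euclBall (ball 0 1) := fun _ hz ↦ mem_euclBall_iff.mp hz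
  have h₀ : (0 : ℂ × ℂ) ∈ euclBall := by simp [euclBall]
  have hq : F 0 ∈ bidisc := hF h₀
  have hq_neg : -F 0 ∈ bidisc := by simpa [bidisc] using hq
  refine Prod.not_strictConvexSpace (E := ℂ) (F := ℂ)
    (StrictConvexSpace.of_rightInverse_unitBall (E := WithLp 2 (ℂ × ℂ))
      (f := mobiusProd (F 0) ∘ F ∘ e) (g := e.symm ∘ G ∘ mobiusProd (-F 0)) ?_ ?_ ?_ ?_ ?_ ?_)
  · exact fun x hx ↦ ((differentiableAt_mobiusProd hq (hF (he hx))).comp x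
      ((hdF _ (he hx)).comp x e.differentiableAt)).differentiableWithinAt
  · rw [← bidisc_eq_ball]
    exact fun w hw ↦ (e.symm.differentiableAt.comp w ((hdG _ (mapsTo_mobiusProd hq_neg hw)).comp w
      (differentiableAt_mobiusProd hq_neg hw))).differentiableWithinAt
  · rw [← bidisc_eq_ball]
    exact (mapsTo_mobiusProd hq).comp (hF.comp he)
  · rw [← bidisc_eq_ball]
    exact he_symm.comp (hG.comp (mapsTo_mobiusProd hq_neg))
  · rw [← bidisc_eq_ball]
    intro w hw
    simp only [Function.comp_apply, ContinuousLinearEquiv.apply_symm_apply,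
      hFG _ (mapsTo_mobiusProd hq_neg hw), mobiusProd_mobiusProd_neg hq hw]
  · simp only [Function.comp_apply, mobiusProd_neg_zero, hGF 0 h₀, map_zero]
end
end
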